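/- arXiv:1212.4769 — 2 statements merged into one kernel-verified Lean document; each statement's English description precedes it below -/
import Mathlib

section
/- Let l ≥ 1 be a natural number and let X, a, d be real numbers with a > 0 and d > 0. Let μ : ℕ → ℝ satisfy μ(l+1) = 0 and μ(i) ≥ μ(i+1) for 1 ≤ i ≤ l; let r : ℕ → ℝ satisfy r(i+1) ≥ r(i) + 1 for 1 ≤ i ≤ l−1; let dd : ℕ → ℝ satisfy dd(i) ≥ 0 and dd(i) ≥ a·(r(i) − 1) for 1 ≤ i ≤ l, with dd(l+1) = dd(l) = d. Assume X ≥ Σ_{i=1}^{l} (dd(i) + dd(i+1))·(μ(i) − μ(i+1)) and X ≥ (dd(1) + dd(l))·(μ(1) − μ(l)) + 2·dd(l)·μ(l). Then X ≥ (2·a·d/(a + d)) · Σ_{i=1}^{l} r(i)·(μ(i) − μ(i+1)). -/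
/-!
Write `δᵢ = μᵢ - μᵢ₊₁ ≥ 0` and `l = m + 1`. Linear semistability applied to two consecutive
steps gives `ddᵢ + ddᵢ₊₁ ≥ a (2 rᵢ - 1)`, so Xiao's first inequality yields
`X ≥ a ∑ᵢ₌₁ᵐ (2 rᵢ - 1) δᵢ + 2 d μₗ`, while the second one, with `dd₁ ≥ 0`, yields
`X ≥ d ∑ᵢ₌₁ᵐ δᵢ + 2 d μₗ`. The combination with weights `d` and `a` makes the `-a δᵢ` terms cancel:
`(a + d) X ≥ 2 a d ∑ᵢ₌₁ᵐ rᵢ δᵢ + 2 d (a + d) μₗ`, and the last term dominates `2 a d rₗ μₗ`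
because `d = ddₗ ≥ a (rₗ - 1)`.
-/

open Finset

theorem sum_Icc_one_sub_succ (μ : ℕ → ℝ) (m : ℕ) :
    ∑ i ∈ Icc 1 m, (μ i - μ (i + 1)) = μ 1 - μ (m + 1) := by
  induction m with
  | zero => simp
  | succ n ih =>
    rw [sum_Icc_succ_top (by omega), ih]
    ring

theorem sum_mul_le_sum_add_succ_mul {a : ℝ} (ha : 0 ≤ a) {μ r dd : ℕ → ℝ} {m : ℕ}
    (hμ : ∀ i ∈ Icc 1 m, μ (i + 1) ≤ μ i)
    (hr : ∀ i ∈ Icc 1 m, r i + 1 ≤ r (i + 1))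
    (hdda : ∀ i ∈ Icc 1 (m + 1), a * (r i - 1) ≤ dd i) :
    ∑ i ∈ Icc 1 m, a * (2 * r i - 1) * (μ i - μ (i + 1)) ≤
      ∑ i ∈ Icc 1 m, (dd i + dd (i + 1)) * (μ i - μ (i + 1)) := by
  refine sum_le_sum fun i hi => mul_le_mul_of_nonneg_right ?_ (sub_nonneg.2 (hμ i hi))
  have hi' := mem_Icc.1 hi
  have h_cur := hdda i (mem_Icc.2 ⟨hi'.1, by omega⟩)
  have h_next := hdda (i + 1) (mem_Icc.2 ⟨by omega, by omega⟩)
  linarith [mul_le_mul_of_nonneg_left (hr i hi) ha]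

theorem two_mul_mul_sum_le_of_weighted_bounds {s : Finset ℕ} {a d X t ρ : ℝ} {r δ : ℕ → ℝ}
    (ha : 0 ≤ a) (hd : 0 ≤ d) (ht : 0 ≤ t) (hρ : a * ρ ≤ a + d)
    (hX_rank : ∑ i ∈ s, a * (2 * r i - 1) * δ i + 2 * d * t ≤ X)
    (hX_degree : d * ∑ i ∈ s, δ i + 2 * d * t ≤ X) :
    2 * a * d * (∑ i ∈ s, r i * δ i + ρ * t) ≤ X * (a + d) := by
  have h_weights : d * ∑ i ∈ s, a * (2 * r i - 1) * δ i + a * (d * ∑ i ∈ s, δ i) =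
      2 * a * d * ∑ i ∈ s, r i * δ i := by
    simp only [mul_sum, ← sum_add_distrib]
    exact sum_congr rfl fun i _ => by ring
  calc 2 * a * d * (∑ i ∈ s, r i * δ i + ρ * t)
      = 2 * a * d * ∑ i ∈ s, r i * δ i + 2 * d * (a * ρ) * t := by ring
    _ ≤ 2 * a * d * ∑ i ∈ s, r i * δ i + 2 * d * (a + d) * t := by gcongr
    _ = d * (∑ i ∈ s, a * (2 * r i - 1) * δ i + 2 * d * t) +
          a * (d * ∑ i ∈ s, δ i + 2 * d * t) := by linear_combination -h_weights
    _ ≤ d * X + a * X := by gcongr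
    _ = X * (a + d) := by ring

/-- Numerical content of "linear semistability implies f-positivity via Xiao's
method" for fibred surfaces. -/
theorem stmt_5 (l : ℕ) (hl : 1 ≤ l) (X a d : ℝ) (ha : 0 < a) (hd : 0 < d)
    (μ r dd : ℕ → ℝ)
    (hμl : μ (l + 1) = 0)
    (hμ : ∀ i, 1 ≤ i → i ≤ l → μ i ≥ μ (i + 1))
    (hr : ∀ i, 1 ≤ i → i ≤ l - 1 → r (i + 1) ≥ r i + 1)
    (hdd0 : ∀ i, 1 ≤ i → i ≤ l → 0 ≤ dd i)
    (hdda : ∀ i, 1 ≤ i → i ≤ l → dd i ≥ a * (r i - 1))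
    (hddl1 : dd (l + 1) = dd l)
    (hddl : dd l = d)
    (hX1 : X ≥ ∑ i ∈ Finset.Icc 1 l, (dd i + dd (i + 1)) * (μ i - μ (i + 1)))
    (hX2 : X ≥ (dd 1 + dd l) * (μ 1 - μ l) + 2 * dd l * μ l) :
    X ≥ (2 * a * d / (a + d)) * ∑ i ∈ Finset.Icc 1 l, r i * (μ i - μ (i + 1)) := by
  obtain ⟨m, rfl⟩ : ∃ m, l = m + 1 := ⟨l - 1, by omega⟩
  have hμ_top : 0 ≤ μ (m + 1) := by linarith [hμ (m + 1) hl le_rfl]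
  have hμ_step : ∀ i ∈ Icc 1 m, μ (i + 1) ≤ μ i := fun i hi =>
    hμ i (mem_Icc.1 hi).1 (by have := (mem_Icc.1 hi).2; omega)
  have hμ_drop : 0 ≤ μ 1 - μ (m + 1) := by
    rw [← sum_Icc_one_sub_succ]; exact sum_nonneg fun i hi => sub_nonneg.2 (hμ_step i hi)
  have hX_rank : ∑ i ∈ Icc 1 m, a * (2 * r i - 1) * (μ i - μ (i + 1)) + 2 * d * μ (m + 1) ≤ X := by
    rw [sum_Icc_succ_top (by omega), hddl1, hddl, hμl] at hX1
    have := sum_mul_le_sum_add_succ_mul ha.le hμ_step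
      (fun i hi => hr i (mem_Icc.1 hi).1 (by have := (mem_Icc.1 hi).2; omega))
      (fun i hi => hdda i (mem_Icc.1 hi).1 (mem_Icc.1 hi).2)
    linarith
  have hX_degree : d * ∑ i ∈ Icc 1 m, (μ i - μ (i + 1)) + 2 * d * μ (m + 1) ≤ X := by
    rw [sum_Icc_one_sub_succ]
    rw [hddl] at hX2
    linarith [mul_nonneg (hdd0 1 le_rfl hl) hμ_drop]
  have hr_top : a * r (m + 1) ≤ a + d := by linarith [hddl ▸ hdda (m + 1) hl le_rfl]
  rw [sum_Icc_succ_top (by omega), hμl, sub_zero, ge_iff_le, div_mul_eq_mul_div,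
    div_le_iff₀ (by positivity)]
  exact two_mul_mul_sum_le_of_weighted_bounds ha.le hd.le hμ_top hr_top hX_rank hX_degree
end

section
/- Let n ≥ 2 be a natural number and let X, D, μ, d, r be real numbers with d > 0 and r > n − 1. Set a = d/(r − n + 1). If X ≥ n·a·D − n·(n−1)·a·μ and X ≥ μ·d, then X ≥ (n·d/(r + (n−1)²)) · D. -/
/-- Adding `s` times the first bound to `c` times the second cancels the slope `μ`. -/
theorem le_of_xiao_bound_of_slope_bound {X D μ d k s c : ℝ} (hs : 0 < s) (hc : 0 ≤ c)
    (hXiao : X ≥ k * (d / s) * D - c * (d / s) * μ) (hslope : X ≥ μ * d) :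
    X ≥ k * d / (s + c) * D := by
  have hXiao' : s * X ≥ k * d * D - c * d * μ := by
    calc s * X ≥ s * (k * (d / s) * D - c * (d / s) * μ) := by gcongr
      _ = k * d * D - c * d * μ := by field_simp
  have hslope' : c * X ≥ c * (μ * d) := by gcongr
  rw [ge_iff_le, div_mul_eq_mul_div, div_le_iff₀ (by positivity)]
  linarith

theorem natCast_mul_natCast_sub_one_nonneg (n : ℕ) : 0 ≤ (n : ℝ) * ((n : ℝ) - 1) := by
  rcases n with _ | n
  · simp
  · push_cast
    nlinarith

theorem stmt_7_general (n : ℕ) (X D μ d r a : ℝ)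
    (hr : r > (n : ℝ) - 1)
    (ha : a = d / (r - (n : ℝ) + 1))
    (hX1 : X ≥ (n : ℝ) * a * D - (n : ℝ) * ((n : ℝ) - 1) * a * μ)
    (hX2 : X ≥ μ * d) :
    X ≥ ((n : ℝ) * d / (r + ((n : ℝ) - 1) ^ 2)) * D := by
  have hsplit : r + ((n : ℝ) - 1) ^ 2 = (r - n + 1) + n * (n - 1) := by ring
  rw [hsplit]
  subst ha
  exact le_of_xiao_bound_of_slope_bound (by linarith) (natCast_mul_natCast_sub_one_nonneg n)
    hX1 hX2

/-- Numerical content of Xiao's method in higher dimension under Mumford-linear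
semistability. -/
theorem stmt_7 (n : ℕ) (hn : 2 ≤ n) (X D μ d r a : ℝ)
    (hd : 0 < d) (hr : r > (n : ℝ) - 1)
    (ha : a = d / (r - (n : ℝ) + 1))
    (hX1 : X ≥ (n : ℝ) * a * D - (n : ℝ) * ((n : ℝ) - 1) * a * μ)
    (hX2 : X ≥ μ * d) :
    X ≥ ((n : ℝ) * d / (r + ((n : ℝ) - 1) ^ 2)) * D :=
  stmt_7_general n X D μ d r a hr ha hX1 hX2
end
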